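/- arXiv:2409.11497 — 4 statements merged into one kernel-verified Lean document; each statement's English description precedes it below -/
import Mathlib

section
/- Let μ ∈ ℝ^p and let Σ and Σ' be p×p positive definite matrices. Let X ~ N_p(μ, Σ) and W ~ N_p(0, Σ') be independent random vectors, and set X^(1) = (X + W)/√2 and X^(2) = (X − W)/√2. Then the 2p-dimensional random vector (X^(1), X^(2)) is multivariate Gaussian with mean (μ/√2, μ/√2) and block covariance matrix whose diagonal blocks both equal (Σ + Σ')/2 and whose off-diagonal blocks both equal (Σ − Σ')/2. -/
/-!
Fix a linear functional `l = (l₁, l₂)` on `ℝ^p × ℝ^p`. On the fission vector it equals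
`a ⬝ X + b ⬝ W` with `a = (l₁ + l₂)/√2` and `b = (l₁ - l₂)/√2`. By independence this is the
convolution of `N(a ⬝ μ, aᵀ S a)` and `N(0, bᵀ S' b)`, i.e. `N(a ⬝ μ, aᵀ S a + bᵀ S' b)`, and
`a ⬝ μ` and `aᵀ S a + bᵀ S' b` are exactly `l ⬝ (μ/√2, μ/√2)` and the quadratic form of the block
covariance matrix at `l`. Measurability of `X` and `W` comes for free: a pushforward along a
non-a.e.-measurable map is zero, hence not Gaussian.
-/

open MeasureTheory ProbabilityTheory Matrix BigOperators

noncomputable section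

/-- A measure `ν` on `ι → ℝ` is the multivariate Gaussian distribution with mean vector `m` and
covariance matrix `S` if every linear functional pushes `ν` forward to the one-dimensional
Gaussian distribution with the corresponding mean and variance (Cramér–Wold characterization). -/
def IsGaussianVec {ι : Type*} [Fintype ι] (ν : Measure (ι → ℝ)) (m : ι → ℝ)
    (S : Matrix ι ι ℝ) : Prop :=
  ∀ l : ι → ℝ,
    ν.map (fun x => ∑ i, l i * x i) =
      gaussianReal (∑ i, l i * m i) (∑ i, ∑ j, l i * S i j * l j).toNNReal

lemma Matrix.PosSemidef.sum_mul_mul_nonneg {ι : Type*} [Fintype ι] {S : Matrix ι ι ℝ}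
    (hS : S.PosSemidef) (l : ι → ℝ) : 0 ≤ ∑ i, ∑ j, l i * S i j * l j := by
  simpa [dotProduct, mulVec, Finset.mul_sum, mul_assoc] using hS.dotProduct_mulVec_nonneg l

lemma measurable_sum_mul_apply {ι : Type*} [Fintype ι] (l : ι → ℝ) :
    Measurable fun x : ι → ℝ => ∑ i, l i * x i := by
  fun_prop

section IsGaussianVec

variable {ι Ω : Type*} [Fintype ι] [MeasurableSpace Ω] {P : Measure Ω}
  {X : Ω → ι → ℝ} {m : ι → ℝ} {S : Matrix ι ι ℝ}

lemma IsGaussianVec.aemeasurable (hX : IsGaussianVec (P.map X) m S) : AEMeasurable X P := by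
  refine AEMeasurable.of_map_ne_zero fun h => ?_
  have := hX 0
  rw [h, Measure.map_zero] at this
  exact (IsProbabilityMeasure.ne_zero _) this.symm

lemma IsGaussianVec.map_sum_mul (hX : IsGaussianVec (P.map X) m S) (l : ι → ℝ) :
    P.map (fun ω => ∑ i, l i * X ω i) =
      gaussianReal (∑ i, l i * m i) (∑ i, ∑ j, l i * S i j * l j).toNNReal := by
  rw [← hX l, AEMeasurable.map_map_of_aemeasurable (measurable_sum_mul_apply l).aemeasurable
    hX.aemeasurable]
  rfl

lemma IsGaussianVec.map_add_of_indepFun {W : Ω → ι → ℝ} {m' : ι → ℝ} {S' : Matrix ι ι ℝ}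
    (hS : S.PosSemidef) (hS' : S'.PosSemidef) (hX : IsGaussianVec (P.map X) m S)
    (hW : IsGaussianVec (P.map W) m' S') (hXW : IndepFun X W P) (a b : ι → ℝ) :
    P.map (fun ω => ∑ i, a i * X ω i + ∑ i, b i * W ω i) =
      gaussianReal (∑ i, a i * m i + ∑ i, b i * m' i)
        (∑ i, ∑ j, a i * S i j * a j + ∑ i, ∑ j, b i * S' i j * b j).toNNReal := by
  rw [Real.toNNReal_add (hS.sum_mul_mul_nonneg a) (hS'.sum_mul_mul_nonneg b)]
  exact gaussianReal_add_gaussianReal_of_indepFun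
    (hXW.comp (measurable_sum_mul_apply a) (measurable_sum_mul_apply b))
    (hX.map_sum_mul a) (hW.map_sum_mul b)

end IsGaussianVec

section Fission

variable {ι : Type*} [Fintype ι] (l : ι ⊕ ι → ℝ)

lemma sum_mul_sum_elim_fission (x w : ι → ℝ) :
    ∑ k, l k * Sum.elim (fun i => (x i + w i) / √2) (fun i => (x i - w i) / √2) k =
      ∑ i, (l (.inl i) + l (.inr i)) / √2 * x i + ∑ i, (l (.inl i) - l (.inr i)) / √2 * w i := by
  rw [Fintype.sum_sum_type, ← Finset.sum_add_distrib, ← Finset.sum_add_distrib]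
  refine Finset.sum_congr rfl fun i _ => ?_
  simp only [Sum.elim_inl, Sum.elim_inr]
  ring

lemma sum_mul_fromBlocks_fission (S S' : Matrix ι ι ℝ) :
    ∑ k, ∑ k', l k * fromBlocks ((1 / 2 : ℝ) • (S + S')) ((1 / 2 : ℝ) • (S - S'))
        ((1 / 2 : ℝ) • (S - S')) ((1 / 2 : ℝ) • (S + S')) k k' * l k' =
      ∑ i, ∑ j, (l (.inl i) + l (.inr i)) / √2 * S i j * ((l (.inl j) + l (.inr j)) / √2) +
        ∑ i, ∑ j, (l (.inl i) - l (.inr i)) / √2 * S' i j * ((l (.inl j) - l (.inr j)) / √2) := by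
  have h2 : √2 ^ 2 = 2 := Real.sq_sqrt zero_le_two
  simp only [Fintype.sum_sum_type, fromBlocks_apply₁₁, fromBlocks_apply₁₂, fromBlocks_apply₂₁,
    fromBlocks_apply₂₂, Matrix.smul_apply, Matrix.add_apply, Matrix.sub_apply, smul_eq_mul,
    ← Finset.sum_add_distrib]
  refine Finset.sum_congr rfl fun i _ => Finset.sum_congr rfl fun j _ => ?_
  field_simp
  rw [h2]
  ring

end Fission

theorem gaussian_data_fission_general
    {Ω : Type*} [MeasurableSpace Ω] (P : Measure Ω)
    (p : ℕ) (μ : Fin p → ℝ) (S S' : Matrix (Fin p) (Fin p) ℝ)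
    (hS : S.PosDef) (hS' : S'.PosDef)
    (X W : Ω → Fin p → ℝ)
    (hX : IsGaussianVec (P.map X) μ S)
    (hW : IsGaussianVec (P.map W) (fun _ => 0) S')
    (hindep : IndepFun X W P) :
    IsGaussianVec
      (P.map (fun ω => Sum.elim
        (fun i => (X ω i + W ω i) / Real.sqrt 2)
        (fun i => (X ω i - W ω i) / Real.sqrt 2)))
      (Sum.elim (fun i => μ i / Real.sqrt 2) (fun i => μ i / Real.sqrt 2))
      (Matrix.fromBlocks
        ((1 / 2 : ℝ) • (S + S')) ((1 / 2 : ℝ) • (S - S'))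
        ((1 / 2 : ℝ) • (S - S')) ((1 / 2 : ℝ) • (S + S'))) := by
  intro l
  have hF : AEMeasurable (fun ω => Sum.elim (fun i => (X ω i + W ω i) / √2)
      (fun i => (X ω i - W ω i) / √2)) P := by
    have := hX.aemeasurable
    have := hW.aemeasurable
    refine aemeasurable_pi_lambda _ fun k => ?_
    cases k <;> simp only [Sum.elim_inl, Sum.elim_inr] <;> fun_prop
  have hmean : ∑ k, l k * Sum.elim (fun i => μ i / √2) (fun i => μ i / √2) k =
      ∑ i, (l (.inl i) + l (.inr i)) / √2 * μ i +
        ∑ i, (l (.inl i) - l (.inr i)) / √2 * (fun _ => (0 : ℝ)) i := by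
    simpa using sum_mul_sum_elim_fission l μ 0
  rw [AEMeasurable.map_map_of_aemeasurable (measurable_sum_mul_apply l).aemeasurable hF]
  simp only [Function.comp_def, sum_mul_sum_elim_fission, hmean, sum_mul_fromBlocks_fission]
  exact hX.map_add_of_indepFun hS.posSemidef hS'.posSemidef hW hindep _ _

/-- Gaussian data fission (Proposition 3): if `X ~ N_p(μ, S)` and `W ~ N_p(0, S')` are
independent, then `((X + W)/√2, (X − W)/√2)` is a `2p`-dimensional Gaussian with mean
`(μ/√2, μ/√2)`, diagonal covariance blocks `(S + S')/2`, and off-diagonal blocks `(S − S')/2`. -/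
theorem gaussian_data_fission
    {Ω : Type*} [MeasurableSpace Ω] (P : Measure Ω) [IsProbabilityMeasure P]
    (p : ℕ) (μ : Fin p → ℝ) (S S' : Matrix (Fin p) (Fin p) ℝ)
    (hS : S.PosDef) (hS' : S'.PosDef)
    (X W : Ω → Fin p → ℝ) (hXm : Measurable X) (hWm : Measurable W)
    (hX : IsGaussianVec (P.map X) μ S)
    (hW : IsGaussianVec (P.map W) (fun _ => 0) S')
    (hindep : IndepFun X W P) :
    IsGaussianVec
      (P.map (fun ω => Sum.elim
        (fun i => (X ω i + W ω i) / Real.sqrt 2)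
        (fun i => (X ω i - W ω i) / Real.sqrt 2)))
      (Sum.elim (fun i => μ i / Real.sqrt 2) (fun i => μ i / Real.sqrt 2))
      (Matrix.fromBlocks
        ((1 / 2 : ℝ) • (S + S')) ((1 / 2 : ℝ) • (S - S'))
        ((1 / 2 : ℝ) • (S - S')) ((1 / 2 : ℝ) • (S + S'))) :=
  gaussian_data_fission_general P p μ S S' hS hS' X W hX hW hindep
end
end

section
/- Let μ ∈ ℝ, σ² > 0, and let ε_1, ε_2 be positive reals with ε_1 + ε_2 = 1. Let X ~ N(μ, σ²) and Z ~ Beta(ε_1/2, ε_2/2) be independent random variables. Set X^(1) = Z · (X − μ)² and X^(2) = (1 − Z) · (X − μ)². Then X^(1) and X^(2) are independent, X^(1) ~ Gamma(ε_1/2, 1/(2σ²)), and X^(2) ~ Gamma(ε_2/2, 1/(2σ²)). -/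
open MeasureTheory ProbabilityTheory BigOperators
open scoped ENNReal NNReal

noncomputable section

/-- The density of the Beta distribution with parameters `a, b > 0` with respect to Lebesgue
measure: proportional to `x^(a−1) (1−x)^(b−1)` on `(0,1)`, normalized by
`Γ(a+b)/(Γ(a)Γ(b))`. -/
def betaPDF' (a b x : ℝ) : ℝ≥0∞ :=
  if 0 < x ∧ x < 1 then
    ENNReal.ofReal (Real.Gamma (a + b) / (Real.Gamma a * Real.Gamma b)
      * x ^ (a - 1) * (1 - x) ^ (b - 1))
  else 0

/-- The Beta distribution on `ℝ` with parameters `a, b`. -/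
def betaMeasure' (a b : ℝ) : Measure ℝ :=
  volume.withDensity (betaPDF' a b)

/-!
With `W = (X - μ)²` the theorem is the beta–gamma algebra for `Z` and `W`. First,
`W ~ Gamma(1/2, 1/(2σ²))`: the map `x ↦ x²` is two-to-one with Jacobian `2|x|`, and each of its two
branches carries half of the Gamma density. Second, the change of variables
`(z, w) ↦ (z w, (1 - z) w)`, a diffeomorphism `(0,1) × (0,∞) → (0,∞)²` with Jacobian `w`, carries
the density `β_{a,b}(z) γ_{a+b,r}(w)` of independent `Z ~ Beta(a, b)` and `W ~ Gamma(a + b, r)` to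
the product density `γ_{a,r}(u) γ_{b,r}(v)`; here `a + b = (ε₁ + ε₂)/2 = 1/2`.
-/

open Set

section ChangeOfVariables

variable {E : Type*} [MeasurableSpace E] (μ : Measure E)

lemma setLIntegral_eq_lintegral_of_ae_notMem_eq_zero {s : Set E} {h : E → ℝ≥0∞}
    (hs : MeasurableSet s) (h0 : ∀ᵐ x ∂μ, x ∉ s → h x = 0) :
    ∫⁻ x in s, h x ∂μ = ∫⁻ x, h x ∂μ := by
  rw [← lintegral_indicator hs]
  refine lintegral_congr_ae (h0.mono fun x hx => ?_)
  by_cases hxs : x ∈ s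
  · rw [indicator_of_mem hxs]
  · rw [indicator_of_notMem hxs, hx hxs]

variable [NormedAddCommGroup E] [NormedSpace ℝ E] [FiniteDimensional ℝ E] [BorelSpace E]
  [μ.IsAddHaarMeasure]

theorem map_withDensity_eq_withDensity_of_hasFDerivWithinAt
    {s : Set E} {T : E → E} {T' : E → E →L[ℝ] E} {f g : E → ℝ≥0∞}
    (hs : MeasurableSet s) (hTm : Measurable T)
    (hT' : ∀ x ∈ s, HasFDerivWithinAt T (T' x) s x) (hT : InjOn T s)
    (hf : ∀ᵐ x ∂μ, x ∉ s → f x = 0) (hg : ∀ᵐ y ∂μ, y ∉ T '' s → g y = 0)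
    (hfg : ∀ x ∈ s, ENNReal.ofReal |(T' x).det| * g (T x) = f x) :
    (μ.withDensity f).map T = μ.withDensity g := by
  classical
  ext A hA
  rw [Measure.map_apply hTm hA, withDensity_apply _ (hTm hA), withDensity_apply _ hA,
    ← lintegral_indicator (hTm hA), ← lintegral_indicator hA]
  calc ∫⁻ x, (T ⁻¹' A).indicator f x ∂μ
      = ∫⁻ x in s, (T ⁻¹' A).indicator f x ∂μ := by
        refine (setLIntegral_eq_lintegral_of_ae_notMem_eq_zero μ hs ?_).symm
        filter_upwards [hf] with x hx hxs
        simp [indicator_apply, hx hxs]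
    _ = ∫⁻ x in s, ENNReal.ofReal |(T' x).det| * A.indicator g (T x) ∂μ := by
        refine setLIntegral_congr_fun hs fun x hx => ?_
        by_cases hxA : T x ∈ A
        · rw [indicator_of_mem hxA, hfg x hx, indicator_of_mem (mem_preimage.2 hxA)]
        · rw [indicator_of_notMem hxA, indicator_of_notMem (mt mem_preimage.1 hxA), mul_zero]
    _ = ∫⁻ y in T '' s, A.indicator g y ∂μ :=
        (lintegral_image_eq_lintegral_abs_det_fderiv_mul μ hs hT' hT _).symm
    _ = ∫⁻ y, A.indicator g y ∂μ := by
        refine setLIntegral_eq_lintegral_of_ae_notMem_eq_zero μ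
          (measurable_image_of_fderivWithin hs hT' hT) ?_
        filter_upwards [hg] with y hy hys
        simp [indicator_apply, hy hys]

end ChangeOfVariables

lemma measurable_gammaPDF (a r : ℝ) : Measurable (gammaPDF a r) :=
  (measurable_gammaPDFReal a r).ennreal_ofReal

-- Only almost everywhere: `gammaPDF 1 r 0 = r`.
lemma ae_gammaPDF_eq_zero_of_notMem_Ioi (a r : ℝ) :
    ∀ᵐ x ∂volume, x ∉ Ioi (0 : ℝ) → gammaPDF a r x = 0 := by
  filter_upwards [Measure.ae_ne volume (0 : ℝ)] with x hx0 hx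
  exact gammaPDF_of_neg (lt_of_le_of_ne (not_lt.1 hx) hx0)

section GaussianSquare

lemma image_sq_Ioi : (fun x : ℝ => x ^ 2) '' Ioi 0 = Ioi 0 := by
  ext y
  refine ⟨?_, fun hy => ⟨√y, Real.sqrt_pos.2 hy, Real.sq_sqrt (le_of_lt hy)⟩⟩
  rintro ⟨x, hx, rfl⟩
  exact pow_pos (mem_Ioi.1 hx) 2

lemma image_sq_Iio : (fun x : ℝ => x ^ 2) '' Iio 0 = Ioi 0 := by
  ext y
  refine ⟨?_, fun hy => ⟨-√y, neg_neg_of_pos (Real.sqrt_pos.2 hy), ?_⟩⟩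
  · rintro ⟨x, hx, rfl⟩
    exact sq_pos_of_neg (mem_Iio.1 hx)
  · simp [Real.sq_sqrt (le_of_lt hy)]

lemma injOn_sq_Ioi : InjOn (fun x : ℝ => x ^ 2) (Ioi 0) := fun _ hx _ hy h =>
  (sq_eq_sq₀ (le_of_lt hx) (le_of_lt hy)).1 h

lemma injOn_sq_Iio : InjOn (fun x : ℝ => x ^ 2) (Iio 0) := fun x hx y hy h =>
  neg_injective ((sq_eq_sq₀ (neg_nonneg.2 (le_of_lt hx)) (neg_nonneg.2 (le_of_lt hy))).1
    (by simpa only [neg_sq] using h))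

lemma gammaPDF_one_half_sq {v : ℝ≥0} (hv : v ≠ 0) {x : ℝ} (hx : x ≠ 0) :
    ENNReal.ofReal |2 * x| * (gammaPDF (1 / 2) (1 / (2 * v)) (x ^ 2) / 2)
      = gaussianPDF 0 v x := by
  have hv0 : (0 : ℝ) < v := NNReal.coe_pos.2 (pos_iff_ne_zero.2 hv)
  have hpow : (x ^ 2) ^ ((1 : ℝ) / 2 - 1) = |x|⁻¹ := by
    rw [show (1 : ℝ) / 2 - 1 = -(1 / 2) by norm_num, Real.rpow_neg (sq_nonneg x),
      ← Real.sqrt_eq_rpow, Real.sqrt_sq_eq_abs]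
  have hrate : (1 / (2 * (v : ℝ))) ^ ((1 : ℝ) / 2) = (√(2 * v))⁻¹ := by
    rw [← Real.sqrt_eq_rpow, Real.sqrt_div' _ (by positivity), Real.sqrt_one, one_div]
  have hnorm : √(2 * Real.pi * v) = √(2 * v) * √Real.pi := by
    rw [← Real.sqrt_mul (by positivity)]; ring_nf
  rw [gammaPDF_of_nonneg (sq_nonneg x), gaussianPDF, ← ENNReal.ofReal_ofNat 2,
    ← ENNReal.ofReal_div_of_pos two_pos, ← ENNReal.ofReal_mul (abs_nonneg _)]
  congr 1
  rw [gaussianPDFReal, sub_zero, hpow, hrate, Real.Gamma_one_half_eq, hnorm, abs_mul, abs_two]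
  field_simp

lemma withDensity_eq_add_Iio_Ioi (f : ℝ → ℝ≥0∞) (hf : Measurable f) :
    volume.withDensity f
      = volume.withDensity ((Iio 0).indicator f) + volume.withDensity ((Ioi 0).indicator f) := by
  rw [← withDensity_add_left (hf.indicator measurableSet_Iio)]
  refine withDensity_congr_ae ?_
  filter_upwards [Measure.ae_ne volume (0 : ℝ)] with x hx0
  rcases lt_or_gt_of_ne hx0 with hx | hx <;> simp [hx, not_lt.2 (le_of_lt hx)]

lemma gaussianReal_map_sq {v : ℝ≥0} (hv : v ≠ 0) :
    (gaussianReal 0 v).map (fun x => x ^ 2) = gammaMeasure (1 / 2) (1 / (2 * v)) := by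
  have hT : Measurable (fun x : ℝ => x ^ 2) := by fun_prop
  have hT' (x : ℝ) : HasFDerivAt (fun x : ℝ => x ^ 2)
      (ContinuousLinearMap.toSpanSingleton ℝ (2 * x)) x := by
    simpa using (hasDerivAt_pow 2 x).hasFDerivAt
  have branch (s : Set ℝ) (hs : MeasurableSet s) (hs0 : (0 : ℝ) ∉ s)
      (himage : (fun x : ℝ => x ^ 2) '' s = Ioi 0) (hinj : InjOn (fun x : ℝ => x ^ 2) s) :
      (volume.withDensity (s.indicator (gaussianPDF 0 v))).map (fun x => x ^ 2)
        = volume.withDensity (fun y => gammaPDF (1 / 2) (1 / (2 * v)) y / 2) := by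
    refine map_withDensity_eq_withDensity_of_hasFDerivWithinAt volume hs hT
      (fun x _ => (hT' x).hasFDerivWithinAt) hinj
      (ae_of_all _ fun x hx => indicator_of_notMem hx _) ?_ fun x hx => ?_
    · rw [himage]
      filter_upwards [ae_gammaPDF_eq_zero_of_notMem_Ioi (1 / 2) (1 / (2 * v))] with y hy hys
      rw [hy hys, ENNReal.zero_div]
    · rw [ContinuousLinearMap.det_toSpanSingleton, indicator_of_mem hx]
      exact gammaPDF_one_half_sq hv (ne_of_mem_of_not_mem hx hs0)
  rw [gaussianReal_of_var_ne_zero 0 hv,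
    withDensity_eq_add_Iio_Ioi _ (measurable_gaussianPDF 0 v), Measure.map_add _ _ hT,
    branch _ measurableSet_Iio self_notMem_Iio image_sq_Iio injOn_sq_Iio,
    branch _ measurableSet_Ioi self_notMem_Ioi image_sq_Ioi injOn_sq_Ioi,
    ← withDensity_add_left ((measurable_gammaPDF _ _).div_const 2),
    gammaMeasure]
  congr 1 with y
  exact ENNReal.add_halves _

lemma gaussianReal_map_sub_sq (μ : ℝ) {v : ℝ≥0} (hv : v ≠ 0) :
    (gaussianReal μ v).map (fun x => (x - μ) ^ 2) = gammaMeasure (1 / 2) (1 / (2 * v)) := by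
  rw [show (fun x => (x - μ) ^ 2) = (fun x => x ^ 2) ∘ (· - μ) from rfl,
    ← Measure.map_map (by fun_prop) (by fun_prop), gaussianReal_map_sub_const, sub_self,
    gaussianReal_map_sq hv]

end GaussianSquare

section BetaGamma

open ContinuousLinearMap (fst snd)

lemma measurable_betaPDF' (a b : ℝ) : Measurable (betaPDF' a b) :=
  Measurable.ite measurableSet_Ioo (by fun_prop) measurable_const

def thinning (p : ℝ × ℝ) : ℝ × ℝ := (p.1 * p.2, (1 - p.1) * p.2)

lemma measurable_thinning : Measurable thinning := by
  unfold thinning; fun_prop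

def thinningDeriv (p : ℝ × ℝ) : ℝ × ℝ →L[ℝ] ℝ × ℝ :=
  (p.1 • snd ℝ ℝ ℝ + p.2 • fst ℝ ℝ ℝ).prod
    ((1 - p.1) • snd ℝ ℝ ℝ - p.2 • fst ℝ ℝ ℝ)

lemma hasFDerivAt_thinning (p : ℝ × ℝ) : HasFDerivAt thinning (thinningDeriv p) p := by
  have h1 : HasFDerivAt (fun q : ℝ × ℝ => q.1 * q.2)
      (p.1 • snd ℝ ℝ ℝ + p.2 • fst ℝ ℝ ℝ) p :=
    hasFDerivAt_fst.mul hasFDerivAt_snd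
  have h2 : HasFDerivAt (fun q : ℝ × ℝ => (1 - q.1) * q.2)
      ((1 - p.1) • snd ℝ ℝ ℝ - p.2 • fst ℝ ℝ ℝ) p := by
    have h : HasFDerivAt (fun q : ℝ × ℝ => (1 - q.1) * q.2)
        ((1 - p.1) • snd ℝ ℝ ℝ
          + p.2 • ((0 : ℝ × ℝ →L[ℝ] ℝ) - fst ℝ ℝ ℝ)) p :=
      ((hasFDerivAt_const (1 : ℝ) p).sub hasFDerivAt_fst).mul hasFDerivAt_snd
    rwa [zero_sub, smul_neg, ← sub_eq_add_neg] at h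
  exact h1.prodMk h2

lemma det_thinningDeriv (p : ℝ × ℝ) : (thinningDeriv p).det = p.2 := by
  rw [ContinuousLinearMap.det, ← LinearMap.det_toMatrix (Module.Basis.finTwoProd ℝ),
    Matrix.det_fin_two]
  simp [LinearMap.toMatrix_apply, thinningDeriv]
  ring

lemma injOn_thinning : InjOn thinning (Ioo 0 1 ×ˢ Ioi 0) := by
  rintro ⟨z, w⟩ ⟨-, hw⟩ ⟨z', w'⟩ - h
  simp only [thinning, Prod.mk.injEq] at h
  obtain rfl : w = w' := by linarith [h.1, h.2]
  rw [mul_right_cancel₀ (ne_of_gt hw) h.1]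

lemma image_thinning : thinning '' (Ioo 0 1 ×ˢ Ioi 0) = Ioi 0 ×ˢ Ioi 0 := by
  ext ⟨u, v⟩
  constructor
  · rintro ⟨⟨z, w⟩, ⟨⟨hz0, hz1⟩, hw⟩, h⟩
    cases h
    exact ⟨mul_pos hz0 hw, mul_pos (sub_pos.2 hz1) hw⟩
  · rintro ⟨hu, hv⟩
    have hs : (0 : ℝ) < u + v := add_pos hu hv
    refine ⟨(u / (u + v), u + v),
      ⟨⟨div_pos hu hs, (div_lt_one hs).2 (lt_add_of_pos_right u hv)⟩, hs⟩, ?_⟩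
    simp only [thinning, Prod.mk.injEq]
    constructor
    · field_simp
    · field_simp; ring

lemma betaPDF'_mul_gammaPDF {a b r z w : ℝ} (ha : 0 < a) (hb : 0 < b) (hr : 0 < r)
    (hz0 : 0 < z) (hz1 : z < 1) (hw : 0 < w) :
    ENNReal.ofReal |w| * (gammaPDF a r (z * w) * gammaPDF b r ((1 - z) * w))
      = betaPDF' a b z * gammaPDF (a + b) r w := by
  have hz1' : 0 ≤ 1 - z := sub_nonneg.2 hz1.le
  rw [gammaPDF_of_nonneg (mul_nonneg hz0.le hw.le),
    gammaPDF_of_nonneg (mul_nonneg hz1' hw.le), gammaPDF_of_nonneg hw.le, betaPDF',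
    if_pos ⟨hz0, hz1⟩, ← ENNReal.ofReal_mul (by positivity),
    ← ENNReal.ofReal_mul (abs_nonneg _), ← ENNReal.ofReal_mul (by positivity)]
  congr 1
  have hwpow : w * (w ^ (a - 1) * w ^ (b - 1)) = w ^ (a + b - 1) := by
    nth_rewrite 1 [← Real.rpow_one w]
    rw [← Real.rpow_add hw, ← Real.rpow_add hw]
    ring_nf
  have hexp :
      Real.exp (-(r * (z * w))) * Real.exp (-(r * ((1 - z) * w))) = Real.exp (-(r * w)) := by
    rw [← Real.exp_add]; ring_nf
  calc |w| * (r ^ a / Real.Gamma a * (z * w) ^ (a - 1) * Real.exp (-(r * (z * w)))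
        * (r ^ b / Real.Gamma b * ((1 - z) * w) ^ (b - 1) * Real.exp (-(r * ((1 - z) * w)))))
      = (r ^ a * r ^ b) / (Real.Gamma a * Real.Gamma b) * (z ^ (a - 1) * (1 - z) ^ (b - 1))
        * (w * (w ^ (a - 1) * w ^ (b - 1)))
        * (Real.exp (-(r * (z * w))) * Real.exp (-(r * ((1 - z) * w)))) := by
        rw [abs_of_pos hw, Real.mul_rpow hz0.le hw.le, Real.mul_rpow hz1' hw.le]; ring
    _ = Real.Gamma (a + b) / (Real.Gamma a * Real.Gamma b) * z ^ (a - 1) * (1 - z) ^ (b - 1)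
        * (r ^ (a + b) / Real.Gamma (a + b) * w ^ (a + b - 1) * Real.exp (-(r * w))) := by
        rw [hwpow, ← Real.rpow_add hr, hexp]
        field_simp

lemma ae_betaPDF'_mul_gammaPDF_eq_zero (a b c r : ℝ) :
    ∀ᵐ p : ℝ × ℝ, p ∉ Ioo 0 1 ×ˢ Ioi 0 →
      betaPDF' a b p.1 * gammaPDF c r p.2 = 0 := by
  filter_upwards [Measure.quasiMeasurePreserving_snd.ae
    (ae_gammaPDF_eq_zero_of_notMem_Ioi c r)] with p hp hpS
  by_cases hz : 0 < p.1 ∧ p.1 < 1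
  · rw [hp fun hw => hpS ⟨hz, hw⟩, mul_zero]
  · rw [betaPDF', if_neg hz, zero_mul]

lemma ae_gammaPDF_mul_gammaPDF_eq_zero (a b r : ℝ) :
    ∀ᵐ p : ℝ × ℝ, p ∉ Ioi 0 ×ˢ Ioi 0 → gammaPDF a r p.1 * gammaPDF b r p.2 = 0 := by
  filter_upwards [Measure.quasiMeasurePreserving_fst.ae (ae_gammaPDF_eq_zero_of_notMem_Ioi a r),
    Measure.quasiMeasurePreserving_snd.ae (ae_gammaPDF_eq_zero_of_notMem_Ioi b r)]
    with p hp1 hp2 hpS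
  by_cases hu : p.1 ∈ Ioi 0
  · rw [hp2 fun hv => hpS ⟨hu, hv⟩, mul_zero]
  · rw [hp1 hu, zero_mul]

theorem map_thinning_betaMeasure'_prod_gammaMeasure {a b r : ℝ} (ha : 0 < a) (hb : 0 < b)
    (hr : 0 < r) :
    ((betaMeasure' a b).prod (gammaMeasure (a + b) r)).map thinning
      = (gammaMeasure a r).prod (gammaMeasure b r) := by
  rw [betaMeasure', gammaMeasure, gammaMeasure, gammaMeasure,
    prod_withDensity (measurable_betaPDF' a b) (measurable_gammaPDF _ _),
    prod_withDensity (measurable_gammaPDF _ _) (measurable_gammaPDF _ _),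
    ← Measure.volume_eq_prod]
  refine map_withDensity_eq_withDensity_of_hasFDerivWithinAt volume
    (measurableSet_Ioo.prod measurableSet_Ioi) measurable_thinning
    (fun p _ => (hasFDerivAt_thinning p).hasFDerivWithinAt) injOn_thinning
    (ae_betaPDF'_mul_gammaPDF_eq_zero a b (a + b) r) ?_ ?_
  · rw [image_thinning]; exact ae_gammaPDF_mul_gammaPDF_eq_zero a b r
  · rintro ⟨z, w⟩ ⟨⟨hz0, hz1⟩, hw⟩
    rw [det_thinningDeriv]
    exact betaPDF'_mul_gammaPDF ha hb hr hz0 hz1 hw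

end BetaGamma

section Probability

variable {Ω : Type*} [MeasurableSpace Ω] {P : Measure Ω}

lemma indepFun_and_map_eq_of_map_prodMk_eq_prod {β γ : Type*} [MeasurableSpace β]
    [MeasurableSpace γ] [IsFiniteMeasure P] {U : Ω → β} {V : Ω → γ} {ν₁ : Measure β}
    {ν₂ : Measure γ} [IsProbabilityMeasure ν₁] [IsProbabilityMeasure ν₂]
    (hU : AEMeasurable U P) (hV : AEMeasurable V P)
    (h : P.map (fun ω => (U ω, V ω)) = ν₁.prod ν₂) :
    IndepFun U V P ∧ P.map U = ν₁ ∧ P.map V = ν₂ := by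
  have hU' : P.map U = ν₁ := by rw [← Measure.fst_map_prodMk₀ hV, h, Measure.fst_prod]
  have hV' : P.map V = ν₂ := by rw [← Measure.snd_map_prodMk₀ hU, h, Measure.snd_prod]
  exact ⟨(indepFun_iff_map_prod_eq_prod_map_map hU hV).2 (by rw [hU', hV', h]), hU', hV'⟩

theorem indepFun_thinning_of_betaMeasure'_gammaMeasure [IsFiniteMeasure P] {a b r : ℝ}
    (ha : 0 < a) (hb : 0 < b) (hr : 0 < r) {Z W : Ω → ℝ} (hZ : AEMeasurable Z P)
    (hW : AEMeasurable W P) (hZlaw : P.map Z = betaMeasure' a b)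
    (hWlaw : P.map W = gammaMeasure (a + b) r) (hZW : IndepFun Z W P) :
    IndepFun (fun ω => Z ω * W ω) (fun ω => (1 - Z ω) * W ω) P ∧
      P.map (fun ω => Z ω * W ω) = gammaMeasure a r ∧
      P.map (fun ω => (1 - Z ω) * W ω) = gammaMeasure b r := by
  have := isProbabilityMeasure_gammaMeasure ha hr
  have := isProbabilityMeasure_gammaMeasure hb hr
  refine indepFun_and_map_eq_of_map_prodMk_eq_prod (by fun_prop) (by fun_prop) ?_
  have hpair :
      P.map (fun ω => (Z ω, W ω)) = (betaMeasure' a b).prod (gammaMeasure (a + b) r) := by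
    rw [← hZlaw, ← hWlaw]
    exact (indepFun_iff_map_prod_eq_prod_map_map hZ hW).1 hZW
  rw [← map_thinning_betaMeasure'_prod_gammaMeasure ha hb hr, ← hpair,
    AEMeasurable.map_map_of_aemeasurable measurable_thinning.aemeasurable (hZ.prodMk hW)]
  rfl

end Probability

/-- Proposition 6 in the two-fold case: if `X ~ N(μ, σ²)` and `Z ~ Beta(ε₁/2, ε₂/2)` are
independent with `ε₁ + ε₂ = 1`, `ε₁, ε₂ > 0`, then `X⁽¹⁾ = Z (X − μ)²` and
`X⁽²⁾ = (1 − Z)(X − μ)²` are independent, with `X⁽ᵏ⁾ ~ Gamma(ε_k/2, 1/(2σ²))`. -/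
theorem univariate_gaussian_gamma_thinning
    {Ω : Type*} [MeasurableSpace Ω] (P : Measure Ω) [IsProbabilityMeasure P]
    (μ σ2 : ℝ) (hσ2 : 0 < σ2)
    (ε1 ε2 : ℝ) (hε1 : 0 < ε1) (hε2 : 0 < ε2) (hsum : ε1 + ε2 = 1)
    (X Z : Ω → ℝ) (hXm : Measurable X) (hZm : Measurable Z)
    (hX : P.map X = gaussianReal μ σ2.toNNReal)
    (hZ : P.map Z = betaMeasure' (ε1 / 2) (ε2 / 2))
    (hindep : IndepFun X Z P) :
    IndepFun (fun ω => Z ω * (X ω - μ) ^ 2) (fun ω => (1 - Z ω) * (X ω - μ) ^ 2) P ∧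
      P.map (fun ω => Z ω * (X ω - μ) ^ 2) = gammaMeasure (ε1 / 2) (1 / (2 * σ2)) ∧
      P.map (fun ω => (1 - Z ω) * (X ω - μ) ^ 2) = gammaMeasure (ε2 / 2) (1 / (2 * σ2)) := by
  have hW :
      P.map (fun ω => (X ω - μ) ^ 2) = gammaMeasure (ε1 / 2 + ε2 / 2) (1 / (2 * σ2)) := by
    rw [show ε1 / 2 + ε2 / 2 = 1 / 2 by linarith,
      show (fun ω => (X ω - μ) ^ 2) = (fun x => (x - μ) ^ 2) ∘ X from rfl,
      ← Measure.map_map (by fun_prop) hXm, hX,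
      gaussianReal_map_sub_sq μ (Real.toNNReal_pos.2 hσ2).ne', Real.coe_toNNReal _ hσ2.le]
  exact indepFun_thinning_of_betaMeasure'_gammaMeasure (by positivity) (by positivity)
    (by positivity) hZm.aemeasurable (by fun_prop) hZ hW
    (hindep.symm.comp measurable_id (show Measurable fun x => (x - μ) ^ 2 by fun_prop))
end
end

section
/- Let μ ∈ ℝ^p, let Σ and Σ' be p×p positive definite matrices, let r ≥ 1 and K = r + 1. Let X, W_1, …, W_r be mutually independent random vectors in ℝ^p with X ~ N_p(μ, Σ) and W_j ~ N_p(0, Σ') for each j. Let Q be a K×K orthogonal matrix with first column Q_X = (q_1, …, q_K)ᵀ, and for k = 1, …, K define X^(k) = q_k X + Σ_{j=1}^{r} Q_{k,j+1} W_j. Then the Kp-dimensional random vector obtained by stacking X^(1), …, X^(K) is multivariate Gaussian with mean Q_X ⊗ μ and covariance matrix Q_X Q_Xᵀ ⊗ Σ + (I_K − Q_X Q_Xᵀ) ⊗ Σ'. -/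
/-! Write `Z = (X, W₁, …, W_r)` and `q_m` for the `m`-th column of `Q`, so that the stacked vector
is `∑ₘ (q_m ⊗ I) Zₘ`. A linear functional `l` turns it into `∑ₘ ⟨(q_m ⊗ I)ᵀ l, Zₘ⟩`, a sum of
independent real Gaussians; hence it is Gaussian, with mean `⟨l, q₀ ⊗ μ⟩` and variance
`lᵀ (∑ₘ q_m q_mᵀ ⊗ Covₘ) l`. Orthogonality of `Q` (`Q Qᵀ = I`) turns `∑_{m ≥ 1} q_m q_mᵀ` into
`I − q₀ q₀ᵀ`. -/

open MeasureTheory ProbabilityTheory Matrix BigOperators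

noncomputable section

open scoped NNReal

namespace Matrix

variable {R : Type*} [CommSemiring R]

lemma sum_kronecker {ι l m n p : Type*} (s : Finset ι) (A : ι → Matrix l m R)
    (B : Matrix n p R) :
    ∑ j ∈ s, kroneckerMap (· * ·) (A j) B = kroneckerMap (· * ·) (∑ j ∈ s, A j) B := by
  ext
  simp [Matrix.sum_apply, Finset.sum_mul]

lemma sum_vecMulVec_transpose {m n : Type*} [Fintype n] (A B : Matrix m n R) :
    ∑ j, vecMulVec (Aᵀ j) (Bᵀ j) = A * Bᵀ := by
  ext
  simp [mul_apply, vecMulVec_apply, Matrix.sum_apply]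

lemma vecMul_dotProduct_mulVec_vecMul {κ δ : Type*} [Fintype κ] [Fintype δ]
    (l : κ → R) (M : Matrix κ δ R) (C : Matrix δ δ R) :
    (l ᵥ* M) ⬝ᵥ C *ᵥ (l ᵥ* M) = l ⬝ᵥ (M * C * Mᵀ) *ᵥ l := by
  rw [← mulVec_mulVec, ← mulVec_mulVec, mulVec_transpose]
  exact (dotProduct_mulVec _ _ _).symm

variable {κ : Type*} (δ : Type*) [DecidableEq δ]

/-- The Kronecker product `q ⊗ I_δ`, with column index `δ` in place of `Unit × δ`. -/
def colKroneckerOne (q : κ → R) : Matrix (κ × δ) δ R :=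
  of fun ki j => q ki.1 * (1 : Matrix δ δ R) ki.2 j

variable {δ} [Fintype δ]

lemma colKroneckerOne_mulVec (q : κ → R) (z : δ → R) :
    colKroneckerOne δ q *ᵥ z = fun ki => q ki.1 * z ki.2 := by
  funext ki
  simp [colKroneckerOne, mulVec, dotProduct, one_apply]

lemma colKroneckerOne_mul_mul_transpose (q q' : κ → R) (C : Matrix δ δ R) :
    colKroneckerOne δ q * C * (colKroneckerOne δ q')ᵀ =
      kroneckerMap (· * ·) (vecMulVec q q') C := by
  ext ⟨k, i⟩ ⟨k', i'⟩
  simp [colKroneckerOne, mul_apply, one_apply, vecMulVec_apply]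
  ring

end Matrix

section GaussianSums

variable {Ω : Type*} [MeasurableSpace Ω] {P : Measure Ω} [IsProbabilityMeasure P]

lemma ProbabilityTheory.iIndepFun.map_finsetSum_eq_gaussianReal {ι : Type*}
    {Y : ι → Ω → ℝ} (hind : iIndepFun Y P) (hYm : ∀ i, Measurable (Y i)) {m : ι → ℝ}
    {v : ι → ℝ≥0} (hY : ∀ i, P.map (Y i) = gaussianReal (m i) (v i)) (s : Finset ι) :
    P.map (∑ i ∈ s, Y i) = gaussianReal (∑ i ∈ s, m i) (∑ i ∈ s, v i) := by
  classical
  induction s using Finset.induction_on with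
  | empty =>
    simp only [Finset.sum_empty]
    rw [Pi.zero_def, Measure.map_const, measure_univ, one_smul, gaussianReal_zero_var]
  | insert a s ha ih =>
    rw [Finset.sum_insert ha, Finset.sum_insert ha, Finset.sum_insert ha]
    exact gaussianReal_add_gaussianReal_of_indepFun
      (hind.indepFun_finsetSum_of_notMem hYm ha).symm (hY a) ih

lemma isGaussianVec_iff_dotProduct {δ : Type*} [Fintype δ] (ν : Measure (δ → ℝ)) (m : δ → ℝ)
    (S : Matrix δ δ ℝ) :
    IsGaussianVec ν m S ↔
      ∀ l : δ → ℝ, ν.map (l ⬝ᵥ ·) = gaussianReal (l ⬝ᵥ m) (l ⬝ᵥ S *ᵥ l).toNNReal := by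
  simp only [IsGaussianVec, dotProduct, mulVec, Finset.mul_sum, mul_assoc]

theorem isGaussianVec_map_sum_mulVec {ι κ δ : Type*} [Fintype ι] [Fintype κ] [Fintype δ]
    {Z : ι → Ω → δ → ℝ} (hZm : ∀ m, Measurable (Z m)) (hind : iIndepFun Z P)
    {mean : ι → δ → ℝ} {cov : ι → Matrix δ δ ℝ} (hcov : ∀ m, (cov m).PosSemidef)
    (hZ : ∀ m, IsGaussianVec (P.map (Z m)) (mean m) (cov m)) (M : ι → Matrix κ δ ℝ) :
    IsGaussianVec (P.map fun ω => ∑ m, M m *ᵥ Z m ω)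
      (∑ m, M m *ᵥ mean m) (∑ m, M m * cov m * (M m)ᵀ) := by
  simp_rw [isGaussianVec_iff_dotProduct] at hZ ⊢
  intro l
  set c : ι → δ → ℝ := fun m => l ᵥ* M m
  have hlaw : ∀ m, P.map ((c m ⬝ᵥ ·) ∘ Z m) =
      gaussianReal (c m ⬝ᵥ mean m) (c m ⬝ᵥ cov m *ᵥ c m).toNNReal := fun m => by
    rw [← hZ m (c m), Measure.map_map (by fun_prop) (hZm m)]
  have hsum := (hind.comp (fun m => (c m ⬝ᵥ ·)) fun m => by fun_prop)
    |>.map_finsetSum_eq_gaussianReal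
      (fun m => (by fun_prop : Measurable (c m ⬝ᵥ ·)).comp (hZm m)) hlaw Finset.univ
  have hcomp : (l ⬝ᵥ ·) ∘ (fun ω => ∑ m, M m *ᵥ Z m ω) = ∑ m, (c m ⬝ᵥ ·) ∘ Z m := by
    funext ω
    simp [c, dotProduct_sum, dotProduct_mulVec]
  rw [Measure.map_map (by fun_prop) (by fun_prop), hcomp, hsum]
  have hvar_nonneg : ∀ m, 0 ≤ c m ⬝ᵥ cov m *ᵥ c m := fun m => by
    simpa using (hcov m).dotProduct_mulVec_nonneg (c m)
  congr 1
  · simp [c, dotProduct_sum, dotProduct_mulVec]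
  · rw [← Real.toNNReal_sum_of_nonneg fun m _ => hvar_nonneg m]
    simp [c, vecMul_dotProduct_mulVec_vecMul, sum_mulVec, dotProduct_sum]

end GaussianSums

theorem decompose_single_gaussian_into_dependent_folds_general
    {Ω : Type*} [MeasurableSpace Ω] (P : Measure Ω) [IsProbabilityMeasure P]
    (p r : ℕ) (μ : Fin p → ℝ)
    (S S' : Matrix (Fin p) (Fin p) ℝ) (hS : S.PosDef) (hS' : S'.PosDef)
    (X : Ω → Fin p → ℝ) (W : Fin r → Ω → Fin p → ℝ)
    (hXm : Measurable X) (hWm : ∀ j, Measurable (W j))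
    (hindep : iIndepFun
      (Fin.cons X W : Fin (r + 1) → Ω → Fin p → ℝ) P)
    (hX : IsGaussianVec (P.map X) μ S)
    (hW : ∀ j, IsGaussianVec (P.map (W j)) (fun _ => 0) S')
    (Q : Matrix (Fin (r + 1)) (Fin (r + 1)) ℝ) (hQ : Qᵀ * Q = 1)
    (Xf : Fin (r + 1) → Ω → Fin p → ℝ)
    (hXf : ∀ k ω i, Xf k ω i = Q k 0 * X ω i + ∑ j : Fin r, Q k j.succ * W j ω i) :
    IsGaussianVec
      (P.map (fun ω (ki : Fin (r + 1) × Fin p) => Xf ki.1 ω ki.2))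
      (fun ki => Q ki.1 0 * μ ki.2)
      (Matrix.kroneckerMap (· * ·)
          (Matrix.vecMulVec (fun k => Q k 0) (fun k => Q k 0)) S +
        Matrix.kroneckerMap (· * ·)
          ((1 : Matrix (Fin (r + 1)) (Fin (r + 1)) ℝ) -
            Matrix.vecMulVec (fun k => Q k 0) (fun k => Q k 0)) S') := by
  have hcols :
      ∑ j : Fin r, vecMulVec (Qᵀ j.succ) (Qᵀ j.succ) = 1 - vecMulVec (Qᵀ 0) (Qᵀ 0) := by
    rw [eq_sub_iff_add_eq', ← Fin.sum_univ_succ (f := fun m => vecMulVec (Qᵀ m) (Qᵀ m)),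
      sum_vecMulVec_transpose, mul_eq_one_comm.mp hQ]
  have hstack := isGaussianVec_map_sum_mulVec (Z := Fin.cons X W) (Fin.cases hXm hWm) hindep
    (mean := Fin.cons μ fun _ _ => 0) (cov := Fin.cons S fun _ => S')
    (Fin.cases hS.posSemidef fun _ => hS'.posSemidef) (Fin.cases hX hW)
    (fun m => colKroneckerOne (Fin p) (Qᵀ m))
  convert hstack using 2
  · funext ω ⟨k, i⟩
    simp [Fin.sum_univ_succ, hXf, colKroneckerOne_mulVec, Finset.sum_apply]
  · simp [Fin.sum_univ_succ, colKroneckerOne_mulVec, Finset.sum_apply]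
  · simp_rw [colKroneckerOne_mul_mul_transpose, Fin.sum_univ_succ, Fin.cons_zero, Fin.cons_succ,
      sum_kronecker, hcols]
    rfl

/-- Theorem 2 (decomposing one Gaussian into `K = r + 1` dependent Gaussians): with
`X ~ N_p(μ, S)`, `W₁, …, W_r ~ N_p(0, S')` mutually independent, `Q` a `K × K` orthogonal
matrix with first column `Q_X`, and `X⁽ᵏ⁾ = q_k X + ∑_j Q_{k,j+1} W_j`, the stacked
`Kp`-dimensional vector is Gaussian with mean `Q_X ⊗ μ` and covariance
`Q_X Q_Xᵀ ⊗ S + (I_K − Q_X Q_Xᵀ) ⊗ S'`. -/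
theorem decompose_single_gaussian_into_dependent_folds
    {Ω : Type*} [MeasurableSpace Ω] (P : Measure Ω) [IsProbabilityMeasure P]
    (p r : ℕ) (hr : 1 ≤ r) (μ : Fin p → ℝ)
    (S S' : Matrix (Fin p) (Fin p) ℝ) (hS : S.PosDef) (hS' : S'.PosDef)
    (X : Ω → Fin p → ℝ) (W : Fin r → Ω → Fin p → ℝ)
    (hXm : Measurable X) (hWm : ∀ j, Measurable (W j))
    (hindep : iIndepFun
      (Fin.cons X W : Fin (r + 1) → Ω → Fin p → ℝ) P)
    (hX : IsGaussianVec (P.map X) μ S)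
    (hW : ∀ j, IsGaussianVec (P.map (W j)) (fun _ => 0) S')
    (Q : Matrix (Fin (r + 1)) (Fin (r + 1)) ℝ) (hQ : Qᵀ * Q = 1)
    (Xf : Fin (r + 1) → Ω → Fin p → ℝ)
    (hXf : ∀ k ω i, Xf k ω i = Q k 0 * X ω i + ∑ j : Fin r, Q k j.succ * W j ω i) :
    IsGaussianVec
      (P.map (fun ω (ki : Fin (r + 1) × Fin p) => Xf ki.1 ω ki.2))
      (fun ki => Q ki.1 0 * μ ki.2)
      (Matrix.kroneckerMap (· * ·)
          (Matrix.vecMulVec (fun k => Q k 0) (fun k => Q k 0)) S +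
        Matrix.kroneckerMap (· * ·)
          ((1 : Matrix (Fin (r + 1)) (Fin (r + 1)) ℝ) -
            Matrix.vecMulVec (fun k => Q k 0) (fun k => Q k 0)) S') :=
  decompose_single_gaussian_into_dependent_folds_general P p r μ S S' hS hS' X W hXm hWm hindep hX
    hW Q hQ Xf hXf
end
end

section
/- Let T be a set, μ : T → ℝ, and let C and C' : T×T → ℝ be symmetric positive semidefinite kernels. Let r ≥ 1, K = r + 1, and let X, W_1, …, W_r be real-valued stochastic processes indexed by T that are mutually independent as processes, with X ~ GP(μ, C) and W_j ~ GP(0, C') for each j. Let Q be a K×K orthogonal matrix with first column (q_1, …, q_K)ᵀ, and define X^(k)(t) = q_k X(t) + Σ_{j=1}^{r} Q_{k,j+1} W_j(t) for each t ∈ T and k = 1, …, K. Then for each k, X^(k) is a Gaussian process with mean function q_k μ and covariance function q_k² C + (1 − q_k²) C', i.e., X^(k) ~ GP(q_k μ, q_k² C + (1 − q_k²) C'). -/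
/-! Fix `k` and a linear functional `ℓ` of finitely many values. Then
`ℓ(X⁽ᵏ⁾) = q_k ℓ(X) + ∑_j Q_{k,j+1} ℓ(W_j)` is a sum of independent real Gaussians, hence Gaussian
with the means and variances added: mean `q_k ℓ(μ)`, variance
`q_k² ℓCℓ + (∑_j Q_{k,j+1}²) ℓC'ℓ`. Orthonormality of the `k`-th row of `Q` gives
`∑_j Q_{k,j+1}² = 1 - q_k²`. -/

open MeasureTheory ProbabilityTheory Matrix BigOperators

noncomputable section

/-- A real-valued stochastic process `X` indexed by `T` on the probability space `(Ω, P)` is a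
Gaussian process with mean function `μ` and covariance function `C` if all of its
finite-dimensional distributions are multivariate Gaussian with the corresponding mean vectors
and covariance matrices. -/
def IsGaussianProcess {Ω T : Type*} [MeasurableSpace Ω] (P : Measure Ω)
    (X : T → Ω → ℝ) (μ : T → ℝ) (C : T → T → ℝ) : Prop :=
  ∀ (d : ℕ) (t : Fin d → T),
    IsGaussianVec (P.map (fun ω i => X (t i) ω)) (fun i => μ (t i))
      (Matrix.of fun i j => C (t i) (t j))


open scoped NNReal

section GaussianSums

variable {Ω T : Type*} [MeasurableSpace Ω] {P : Measure Ω}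

lemma map_finsetSum_eq_gaussianReal_of_iIndepFun [IsProbabilityMeasure P] {ι : Type*}
    {Y : ι → Ω → ℝ} (hindep : iIndepFun Y P) (hYm : ∀ i, Measurable (Y i)) {m : ι → ℝ}
    {v : ι → ℝ≥0} (hY : ∀ i, P.map (Y i) = gaussianReal (m i) (v i)) (s : Finset ι) :
    P.map (∑ i ∈ s, Y i) = gaussianReal (∑ i ∈ s, m i) (∑ i ∈ s, v i) := by
  classical
  induction s using Finset.induction_on with
  | empty => simp [Pi.zero_def, Measure.map_const, gaussianReal_zero_var]
  | insert i s hi ih =>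
    rw [Finset.sum_insert hi, Finset.sum_insert hi, Finset.sum_insert hi]
    exact gaussianReal_add_gaussianReal_of_indepFun
      (hindep.indepFun_finsetSum_of_notMem hYm hi).symm (hY i) ih

lemma IsGaussianProcess.map_linearCombination {X : T → Ω → ℝ} {μ : T → ℝ} {C : T → T → ℝ}
    (hX : IsGaussianProcess P X μ C) (hXm : ∀ t, Measurable (X t)) {d : ℕ} (t : Fin d → T)
    (l : Fin d → ℝ) :
    P.map (fun ω => ∑ i, l i * X (t i) ω) =
      gaussianReal (∑ i, l i * μ (t i)) (∑ i, ∑ j, l i * C (t i) (t j) * l j).toNNReal := by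
  have := hX d t l
  rwa [Measure.map_map (by fun_prop) (by fun_prop)] at this

lemma sum_sum_mul_sum_mul {ι κ : Type*} [Fintype ι] [Fintype κ] (l : ι → ℝ) (a : κ → ℝ)
    (S : κ → ι → ι → ℝ) :
    ∑ i, ∑ j, l i * (∑ m, a m * S m i j) * l j = ∑ m, a m * ∑ i, ∑ j, l i * S m i j * l j := by
  simp only [Finset.mul_sum, Finset.sum_mul]
  conv_rhs => rw [Finset.sum_comm]
  refine Finset.sum_congr rfl fun i _ => ?_
  rw [Finset.sum_comm]
  exact Finset.sum_congr rfl fun m _ => Finset.sum_congr rfl fun j _ => by ring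

lemma IsGaussianProcess.sum_of_iIndepFun [IsProbabilityMeasure P] {ι : Type*} [Fintype ι]
    {Z : ι → Ω → T → ℝ} (hZm : ∀ m, Measurable (Z m)) (hindep : iIndepFun Z P)
    {μ : ι → T → ℝ} {C : ι → T → T → ℝ}
    -- the variances are clipped by `Real.toNNReal`, so adding them needs nonnegativity
    (hC : ∀ m (d : ℕ) (t : Fin d → T) (c : Fin d → ℝ), 0 ≤ ∑ i, ∑ j, c i * C m (t i) (t j) * c j)
    (hZ : ∀ m, IsGaussianProcess P (fun t ω => Z m ω t) (μ m) (C m)) (a : ι → ℝ) :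
    IsGaussianProcess P (fun t ω => ∑ m, a m * Z m ω t) (fun t => ∑ m, a m * μ m t)
      (fun s t => ∑ m, a m ^ 2 * C m s t) := by
  intro d t l
  set Y : ι → Ω → ℝ := fun m ω => a m * ∑ i, l i * Z m ω (t i)
  have hYindep : iIndepFun Y P := hindep.comp (fun m f => a m * ∑ i, l i * f (t i)) (by fun_prop)
  have hYm : ∀ m, Measurable (Y m) := fun m => by fun_prop
  have hY : ∀ m, P.map (Y m) = gaussianReal (a m * ∑ i, l i * μ m (t i))
      (.mk (a m ^ 2) (sq_nonneg _) * (∑ i, ∑ j, l i * C m (t i) (t j) * l j).toNNReal) := by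
    intro m
    rw [← gaussianReal_map_const_mul, ← (hZ m).map_linearCombination (fun s => by fun_prop) t l,
      Measure.map_map (by fun_prop) (by fun_prop)]
    rfl
  have hsum := map_finsetSum_eq_gaussianReal_of_iIndepFun hYindep hYm hY Finset.univ
  rw [Measure.map_map (by fun_prop) (by fun_prop)]
  convert hsum using 2
  · ext ω
    simp only [Function.comp_apply, Finset.sum_apply, Y, Finset.mul_sum]
    rw [Finset.sum_comm]
    exact Finset.sum_congr rfl fun m _ => Finset.sum_congr rfl fun i _ => by ring
  · simp only [Finset.mul_sum]
    rw [Finset.sum_comm]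
    exact Finset.sum_congr rfl fun m _ => Finset.sum_congr rfl fun i _ => by ring
  · simp only [Matrix.of_apply, sum_sum_mul_sum_mul]
    rw [Real.toNNReal_sum_of_nonneg fun m _ => mul_nonneg (sq_nonneg _) (hC m d t l)]
    refine Finset.sum_congr rfl fun m _ => ?_
    rw [Real.toNNReal_mul (sq_nonneg _), Real.toNNReal_of_nonneg (sq_nonneg _)]

end GaussianSums

lemma Matrix.sum_sq_row_eq_one_of_transpose_mul_self {n : Type*} [Fintype n] [DecidableEq n]
    {Q : Matrix n n ℝ} (hQ : Qᵀ * Q = 1) (k : n) : ∑ j, Q k j ^ 2 = 1 := by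
  have hrow : (Q * Qᵀ) k k = 1 := by rw [mul_eq_one_comm.mp hQ, Matrix.one_apply_eq]
  simpa [Matrix.mul_apply, sq] using hrow

theorem gaussian_process_dependent_marginals_general
    {Ω T : Type*} [MeasurableSpace Ω] (P : Measure Ω) [IsProbabilityMeasure P]
    (μ : T → ℝ) (C C' : T → T → ℝ)
    (hCpsd : ∀ (d : ℕ) (t : Fin d → T) (c : Fin d → ℝ),
      0 ≤ ∑ i, ∑ j, c i * C (t i) (t j) * c j)
    (hC'psd : ∀ (d : ℕ) (t : Fin d → T) (c : Fin d → ℝ),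
      0 ≤ ∑ i, ∑ j, c i * C' (t i) (t j) * c j)
    (r : ℕ)
    (X : T → Ω → ℝ) (W : Fin r → T → Ω → ℝ)
    (hXm : ∀ t, Measurable (X t)) (hWm : ∀ j t, Measurable (W j t))
    (hindep : iIndepFun
      (Fin.cons (fun ω t => X t ω) (fun j ω t => W j t ω) : Fin (r + 1) → Ω → T → ℝ) P)
    (hX : IsGaussianProcess P X μ C)
    (hW : ∀ j, IsGaussianProcess P (W j) (fun _ => 0) C')
    (Q : Matrix (Fin (r + 1)) (Fin (r + 1)) ℝ) (hQ : Qᵀ * Q = 1)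
    (Xf : Fin (r + 1) → T → Ω → ℝ)
    (hXf : ∀ k t ω, Xf k t ω = Q k 0 * X t ω + ∑ j : Fin r, Q k j.succ * W j t ω) :
    ∀ k, IsGaussianProcess P (Xf k) (fun t => Q k 0 * μ t)
      (fun s t => (Q k 0) ^ 2 * C s t + (1 - (Q k 0) ^ 2) * C' s t) := by
  intro k
  have hrow : ∑ j : Fin r, Q k j.succ ^ 2 = 1 - Q k 0 ^ 2 := by
    have hnorm := Q.sum_sq_row_eq_one_of_transpose_mul_self hQ k
    rw [Fin.sum_univ_succ] at hnorm
    linarith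
  have hsum := IsGaussianProcess.sum_of_iIndepFun
    (Fin.cases (measurable_pi_lambda _ hXm) fun j => measurable_pi_lambda _ (hWm j)) hindep
    (μ := Fin.cons μ fun _ _ => 0) (C := Fin.cons C fun _ => C')
    (Fin.cases hCpsd fun _ => hC'psd) (Fin.cases hX hW) (Q k)
  convert hsum using 1
  · ext t ω
    simp [hXf, Fin.sum_univ_succ]
  · ext t
    simp [Fin.sum_univ_succ]
  · ext s t
    simp [Fin.sum_univ_succ, ← Finset.sum_mul, hrow]

/-- Theorem 5, marginal part (decomposing one Gaussian process into `K = r + 1` dependent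
Gaussian processes): with `X ~ GP(μ, C)` and `W₁, …, W_r ~ GP(0, C')` mutually independent as
processes, `Q` a `K × K` orthogonal matrix with first column `(q₁, …, q_K)ᵀ`, and
`X⁽ᵏ⁾(t) = q_k X(t) + ∑_j Q_{k,j+1} W_j(t)`, each `X⁽ᵏ⁾ ~ GP(q_k μ, q_k² C + (1 − q_k²) C')`. -/
theorem gaussian_process_dependent_marginals
    {Ω T : Type*} [MeasurableSpace Ω] (P : Measure Ω) [IsProbabilityMeasure P]
    (μ : T → ℝ) (C C' : T → T → ℝ)
    (hCsymm : ∀ s t, C s t = C t s)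
    (hCpsd : ∀ (d : ℕ) (t : Fin d → T) (c : Fin d → ℝ),
      0 ≤ ∑ i, ∑ j, c i * C (t i) (t j) * c j)
    (hC'symm : ∀ s t, C' s t = C' t s)
    (hC'psd : ∀ (d : ℕ) (t : Fin d → T) (c : Fin d → ℝ),
      0 ≤ ∑ i, ∑ j, c i * C' (t i) (t j) * c j)
    (r : ℕ) (hr : 1 ≤ r)
    (X : T → Ω → ℝ) (W : Fin r → T → Ω → ℝ)
    (hXm : ∀ t, Measurable (X t)) (hWm : ∀ j t, Measurable (W j t))
    (hindep : iIndepFun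
      (Fin.cons (fun ω t => X t ω) (fun j ω t => W j t ω) : Fin (r + 1) → Ω → T → ℝ) P)
    (hX : IsGaussianProcess P X μ C)
    (hW : ∀ j, IsGaussianProcess P (W j) (fun _ => 0) C')
    (Q : Matrix (Fin (r + 1)) (Fin (r + 1)) ℝ) (hQ : Qᵀ * Q = 1)
    (Xf : Fin (r + 1) → T → Ω → ℝ)
    (hXf : ∀ k t ω, Xf k t ω = Q k 0 * X t ω + ∑ j : Fin r, Q k j.succ * W j t ω) :
    ∀ k, IsGaussianProcess P (Xf k) (fun t => Q k 0 * μ t)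
      (fun s t => (Q k 0) ^ 2 * C s t + (1 - (Q k 0) ^ 2) * C' s t) :=
  gaussian_process_dependent_marginals_general P μ C C' hCpsd hC'psd r X W hXm hWm hindep hX hW Q hQ
    Xf hXf
end
end
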